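/- Let ℓ be a prime, r ≥ 1, d ≥ 1 with gcd(d, ℓ) = 1, and set N = d·ℓʳ − 1. Let M be a module over ℤ_ℓ (the ℓ-adic integers) and define Φ : M^N → M^N by Φ(α)_t = α_{t−1} − 2α_t + α_{t+1} (α₀ = α_{N+1} = 0). Then the cokernel of Φ is annihilated by ℓʳ. -/

import Mathlib

/-!
The Dirichlet Laplacian on `n` points has the explicit Green's function
`G(j, k) = min(j, k) · (n + 1 - max(j, k))`, whose second difference in `j` is `-(n + 1) δ_{jk}`;
so `Φ ∘ G = -(n + 1)` with integer coefficients, over any abelian group. For `n + 1 = d ℓʳ` with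
`d` a unit of `ℤ_ℓ`, the preimage `-d⁻¹ G β` of `ℓʳ β` follows.
-/

open Finset

section DirichletLaplacian

variable {M : Type*} [AddCommGroup M] {n : ℕ}

def extendByZero (α : Fin n → M) (j : ℕ) : M :=
  if h : 1 ≤ j ∧ j ≤ n then α ⟨j - 1, by omega⟩ else 0

def dirichletLaplacian (α : Fin n → M) (t : Fin n) : M :=
  extendByZero α t - 2 • extendByZero α (t + 1) + extendByZero α (t + 2)

theorem dirichletLaplacian_smul {R : Type*} [Semiring R] [Module R M] (c : R) (α : Fin n → M) :
    dirichletLaplacian (c • α) = c • dirichletLaplacian α := by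
  ext t
  simp only [dirichletLaplacian, extendByZero, Pi.smul_apply, smul_add, smul_sub, smul_dite,
    smul_zero, smul_comm c (2 : ℕ)]

def greenKernel (n j k : ℕ) : ℤ := min j k * (n + 1 - max j k)

theorem greenKernel_zero_left (n k : ℕ) : greenKernel n 0 k = 0 := by
  simp [greenKernel]

theorem greenKernel_succ_left {k : ℕ} (hk : k ≤ n + 1) : greenKernel n (n + 1) k = 0 := by
  simp [greenKernel, max_eq_left (by exact_mod_cast hk : (k : ℤ) ≤ n + 1)]

theorem greenKernel_secondDiff (n t k : ℕ) :
    greenKernel n t k - 2 * greenKernel n (t + 1) k + greenKernel n (t + 2) k =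
      if k = t + 1 then -(n + 1 : ℤ) else 0 := by
  unfold greenKernel
  rcases lt_trichotomy k (t + 1) with hk | rfl | hk
  · rw [if_neg hk.ne, min_eq_right (by omega), min_eq_right (by omega), min_eq_right (by omega),
      max_eq_left (by omega), max_eq_left (by omega), max_eq_left (by omega)]
    push_cast; ring
  · rw [if_pos rfl, min_eq_left (by omega), min_self, min_eq_right (by omega),
      max_eq_right (by omega), max_self, max_eq_left (by omega)]
    push_cast; ring
  · rw [if_neg hk.ne', min_eq_left (by omega), min_eq_left (by omega), min_eq_left (by omega),
      max_eq_right (by omega), max_eq_right (by omega), max_eq_right (by omega)]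
    push_cast; ring

def greenPotential (β : Fin n → M) (i : Fin n) : M :=
  ∑ k : Fin n, greenKernel n (i + 1) (k + 1) • β k

theorem extendByZero_greenPotential (β : Fin n → M) {j : ℕ} (hj : j ≤ n + 1) :
    extendByZero (greenPotential β) j = ∑ k : Fin n, greenKernel n j (k + 1) • β k := by
  unfold extendByZero
  split_ifs with h
  · simp only [greenPotential, Nat.sub_add_cancel h.1]
  · obtain rfl | rfl : j = 0 ∨ j = n + 1 := by omega
    · simp [greenKernel_zero_left]
    · exact (sum_eq_zero fun k _ => by rw [greenKernel_succ_left (by omega), zero_smul]).symm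

theorem dirichletLaplacian_greenPotential (β : Fin n → M) :
    dirichletLaplacian (greenPotential β) = (-(n + 1 : ℤ)) • β := by
  ext t
  have ht := t.isLt
  simp only [dirichletLaplacian, extendByZero_greenPotential β (by omega : t.1 ≤ n + 1),
    extendByZero_greenPotential β (by omega : t.1 + 1 ≤ n + 1),
    extendByZero_greenPotential β (by omega : t.1 + 2 ≤ n + 1), smul_sum, ← sum_sub_distrib,
    ← sum_add_distrib, ← natCast_zsmul, smul_smul, ← sub_smul, ← add_smul, Nat.cast_ofNat,
    greenKernel_secondDiff]
  simp [Fin.val_inj, ite_smul]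

theorem exists_dirichletLaplacian_eq_smul {R : Type*} [CommRing R] [Module R M] {a c : R}
    (ha : IsUnit a) (hn : (n + 1 : R) = a * c) (β : Fin n → M) :
    ∃ α : Fin n → M, dirichletLaplacian α = c • β := by
  obtain ⟨u, rfl⟩ := ha
  refine ⟨(-(↑u⁻¹ : R)) • greenPotential β, ?_⟩
  rw [dirichletLaplacian_smul, dirichletLaplacian_greenPotential, ← Int.cast_smul_eq_zsmul R,
    smul_smul]
  push_cast
  rw [neg_mul_neg, hn, Units.inv_mul_cancel_left]

end DirichletLaplacian

theorem PadicInt.isUnit_natCast_of_not_dvd {p : ℕ} [hp : Fact p.Prime] {d : ℕ}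
    (hd : ¬p ∣ d) :
    IsUnit (d : ℤ_[p]) :=
  PadicInt.isUnit_iff.2 <| PadicInt.norm_natCast_eq_one_iff.2 <| (hp.out.coprime_iff_not_dvd).2 hd

/-- For `N = d·ℓʳ − 1` with `gcd(d, ℓ) = 1` and `M` a `ℤ_ℓ`-module, the cokernel
of the tridiagonal map `Φ` on `M^N` is annihilated by `ℓʳ`. -/
theorem coker_annihilated (ℓ : ℕ) [Fact ℓ.Prime] (r d : ℕ)
    (hcop : ¬ ℓ ∣ d) (N : ℕ) (hN : N = d * ℓ ^ r - 1)
    (M : Type*) [AddCommGroup M] [Module ℤ_[ℓ] M]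
    (e : (Fin N → M) → ℕ → M)
    (he : ∀ α j, e α j = if h : 1 ≤ j ∧ j ≤ N then α ⟨j - 1, by omega⟩ else 0)
    (Φ : (Fin N → M) → Fin N → M)
    (hΦ : ∀ α t, Φ α t = e α t.1 - 2 • e α (t.1 + 1) + e α (t.1 + 2)) :
    ∀ β : Fin N → M, ∃ α : Fin N → M, ∀ t : Fin N, Φ α t = ℓ ^ r • β t := by
  intro β
  have he' : e = extendByZero := funext₂ he
  have hΦ' : Φ = dirichletLaplacian := by
    funext α t
    rw [hΦ, he']
    rfl
  have hd : 0 < d := Nat.pos_of_ne_zero <| by rintro rfl; exact hcop (dvd_zero ℓ)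
  have hN' : ((N + 1 : ℕ) : ℤ_[ℓ]) = d * ((ℓ ^ r : ℕ) : ℤ_[ℓ]) := by
    rw [hN, Nat.sub_add_cancel (mul_pos hd (pow_pos (Fact.out : ℓ.Prime).pos r)), Nat.cast_mul]
  push_cast at hN'
  obtain ⟨α, hα⟩ :=
    exists_dirichletLaplacian_eq_smul (PadicInt.isUnit_natCast_of_not_dvd hcop) hN' β
  refine ⟨α, fun t => ?_⟩
  rw [hΦ', hα, Pi.smul_apply, ← Nat.cast_pow, Nat.cast_smul_eq_nsmul]
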